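/- Let (Ω, Σ, μ) be a non-atomic σ-finite measure space and Φ₁, Φ₂ Young functions. Then there is no nonzero compact composition operator C_φ from L^{Φ₁}(μ) to L^{Φ₂}(μ): if φ is nonsingular and C_φ: L^{Φ₁}(μ) → L^{Φ₂}(μ) is bounded and compact, then C_φ = 0. -/

import Mathlib

open MeasureTheory Filter Set
open scoped ENNReal

/-- A Young function: continuous, convex on `[0,∞)`, nonnegative, vanishing exactly at `0`,
tending to `∞` and superlinear at `∞`. -/
def IsYoung (Φ : ℝ → ℝ) : Prop :=
  Continuous Φ ∧ ConvexOn ℝ (Ici 0) Φ ∧ (∀ x, 0 ≤ Φ x) ∧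
  (∀ x, 0 ≤ x → (Φ x = 0 ↔ x = 0)) ∧
  Tendsto Φ atTop atTop ∧ Tendsto (fun x => Φ x / x) atTop atTop

/-- The Orlicz modular `∫ Φ(|f|) dμ` (as an extended real). -/
noncomputable def orliczModular {Ω : Type*} [MeasurableSpace Ω] (Φ : ℝ → ℝ)
    (μ : Measure Ω) (f : Ω → ℂ) : ℝ≥0∞ :=
  ∫⁻ x, ENNReal.ofReal (Φ ‖f x‖) ∂μ

/-- Membership in the Orlicz space `L^Φ(μ)`. -/
def MemOrlicz {Ω : Type*} [MeasurableSpace Ω] (Φ : ℝ → ℝ) (μ : Measure Ω)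
    (f : Ω → ℂ) : Prop :=
  Measurable f ∧ ∃ k : ℝ, 0 < k ∧ orliczModular Φ μ (fun x => (k : ℂ) * f x) < ⊤

/-- The Luxemburg norm `N_Φ(f) = inf {k > 0 : ∫ Φ(|f|/k) dμ ≤ 1}`. -/
noncomputable def luxNorm {Ω : Type*} [MeasurableSpace Ω] (Φ : ℝ → ℝ)
    (μ : Measure Ω) (f : Ω → ℂ) : ℝ :=
  sInf {k : ℝ | 0 < k ∧ orliczModular Φ μ (fun x => f x / (k : ℂ)) ≤ 1}

/-- An atom of the measure `μ`. -/
def IsMeasAtom {Ω : Type*} [MeasurableSpace Ω] (μ : Measure Ω) (A : Set Ω) : Prop :=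
  MeasurableSet A ∧ 0 < μ A ∧ ∀ F, F ⊆ A → MeasurableSet F → μ F = 0 ∨ μ F = μ A

/-- `N` is a union of finitely many atoms of `μ`. -/
def FinUnionAtoms {Ω : Type*} [MeasurableSpace Ω] (μ : Measure Ω) (N : Set Ω) : Prop :=
  ∃ (n : ℕ) (C : Fin n → Set Ω), (∀ i, IsMeasAtom μ (C i)) ∧ N = ⋃ i, C i

/-- Sequential compactness of an operator `T` between the Orlicz spaces
`L^{Φ₁}(μ)` and `L^{Φ₂}(μ)`: the image of the unit ball is totally bounded,
expressed via extraction of Cauchy subsequences. -/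
def CompactOp {Ω : Type*} [MeasurableSpace Ω] (Φ₁ Φ₂ : ℝ → ℝ) (μ : Measure Ω)
    (T : (Ω → ℂ) → (Ω → ℂ)) : Prop :=
  ∀ f : ℕ → Ω → ℂ, (∀ n, MemOrlicz Φ₁ μ (f n) ∧ luxNorm Φ₁ μ (f n) ≤ 1) →
    ∃ g : ℕ → ℕ, StrictMono g ∧
      ∀ ε : ℝ, 0 < ε → ∃ N : ℕ, ∀ m, N ≤ m → ∀ n, N ≤ n →
        luxNorm Φ₂ μ (fun x => T (f (g m)) x - T (f (g n)) x) ≤ ε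

lemma young_zero {Φ} (h : IsYoung Φ) : Φ 0 = 0 :=
  (h.2.2.2.1 0 le_rfl).2 rfl

lemma young_pos {Φ} (h : IsYoung Φ) {x : ℝ} (hx : 0 < x) : 0 < Φ x := by
  rcases lt_or_eq_of_le (h.2.2.1 x) with h' | h'
  · exact h'
  · exact absurd ((h.2.2.2.1 x hx.le).1 h'.symm) hx.ne'

lemma young_mono {Φ} (h : IsYoung Φ) {x y : ℝ} (hx : 0 ≤ x) (hxy : x ≤ y) : Φ x ≤ Φ y := by
  rcases eq_or_lt_of_le (hx.trans hxy) with hy | hy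
  · obtain rfl : x = y := le_antisymm hxy (hy ▸ hx)
    exact le_rfl
  · have ht0 : 0 ≤ x / y := div_nonneg hx hy.le
    have ht1 : x / y ≤ 1 := div_le_one_of_le₀ hxy hy.le
    have := h.2.1.2 (mem_Ici.2 le_rfl) (mem_Ici.2 hy.le) (by linarith : (0:ℝ) ≤ 1 - x/y) ht0 (by ring)
    have hxy' : (1 - x/y) • (0:ℝ) + (x/y) • y = x := by
      rw [smul_eq_mul, smul_eq_mul, mul_zero, zero_add, div_mul_cancel₀ x hy.ne']
    rw [hxy'] at this
    calc Φ x ≤ (1 - x/y) * Φ 0 + (x/y) * Φ y := this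
      _ = (x/y) * Φ y := by rw [young_zero h]; ring
      _ ≤ 1 * Φ y := by
          apply mul_le_mul_of_nonneg_right ht1 (h.2.2.1 y)
      _ = Φ y := one_mul _

lemma young_small {Φ} (h : IsYoung Φ) {δ : ℝ} (hδ : 0 < δ) :
    ∃ a : ℝ, 0 < a ∧ ∀ x, 0 ≤ x → x ≤ a → Φ x < δ := by
  have : Tendsto Φ (nhds 0) (nhds 0) := by
    have := h.1.tendsto 0; rwa [young_zero h] at this
  rw [Metric.tendsto_nhds_nhds] at this
  obtain ⟨a, ha, hball⟩ := this δ hδ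
  refine ⟨a/2, by linarith, fun x hx hxa => ?_⟩
  have : dist x 0 < a := by
    rw [Real.dist_eq, sub_zero, abs_of_nonneg hx]; linarith
  have := hball this
  rw [Real.dist_eq, sub_zero, abs_of_nonneg (h.2.2.1 x)] at this
  exact this

lemma young_large {Φ} (h : IsYoung Φ) (M : ℝ) : ∃ b : ℝ, 0 < b ∧ ∀ x, b ≤ x → M ≤ Φ x := by
  obtain ⟨b, hb⟩ := (tendsto_atTop.1 h.2.2.2.2.1 M).exists_forall_of_atTop
  exact ⟨max b 1, lt_of_lt_of_le one_pos (le_max_right _ _),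
    fun x hx => hb x (le_trans (le_max_left _ _) hx)⟩

namespace S8
variable {Ω : Type*} [MeasurableSpace Ω] {μ : Measure Ω}

lemma split_half (hna : ∀ A : Set Ω, ¬ IsMeasAtom μ A) {B : Set Ω} (hB : MeasurableSet B)
    (h0 : 0 < μ B) (hfin : μ B < ⊤) :
    ∃ D, D ⊆ B ∧ MeasurableSet D ∧ 0 < μ D ∧ μ D ≤ μ B / 2 := by
  have h := hna B
  rw [IsMeasAtom] at h
  push_neg at h
  obtain ⟨F, hFB, hFm, hF0, hFne⟩ := h hB h0
  have hFfin : μ F ≠ ⊤ := (lt_of_le_of_lt (measure_mono hFB) hfin).ne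
  have hFlt : μ F < μ B := lt_of_le_of_ne (measure_mono hFB) hFne
  have hdiff : μ (B \ F) = μ B - μ F := measure_diff hFB hFm.nullMeasurableSet hFfin
  by_cases hc : μ F ≤ μ B / 2
  · exact ⟨F, hFB, hFm, pos_iff_ne_zero.2 hF0, hc⟩
  · refine ⟨B \ F, diff_subset, hB.diff hFm, ?_, ?_⟩
    · rw [hdiff]
      exact tsub_pos_of_lt hFlt
    · rw [hdiff]
      rw [tsub_le_iff_right]
      calc μ B = μ B / 2 + μ B / 2 := (ENNReal.add_halves _).symm
        _ ≤ μ B / 2 + μ F := by gcongr; exact le_of_not_ge hc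

lemma small_subset_pow (hna : ∀ A : Set Ω, ¬ IsMeasAtom μ A) {B : Set Ω} (hB : MeasurableSet B)
    (h0 : 0 < μ B) (hfin : μ B < ⊤) (n : ℕ) :
    ∃ D, D ⊆ B ∧ MeasurableSet D ∧ 0 < μ D ∧ μ D ≤ μ B / 2 ^ n := by
  induction n with
  | zero => exact ⟨B, subset_rfl, hB, h0, by simp⟩
  | succ n ih =>
    obtain ⟨D, hDB, hDm, hD0, hDle⟩ := ih
    obtain ⟨E, hED, hEm, hE0, hEle⟩ := split_half hna hDm hD0 (lt_of_le_of_lt (measure_mono hDB) hfin)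
    refine ⟨E, hED.trans hDB, hEm, hE0, hEle.trans ?_⟩
    have heq : μ B / 2 ^ (n+1) = (μ B / 2 ^ n) / 2 := by
      rw [pow_succ, div_eq_mul_inv, div_eq_mul_inv, div_eq_mul_inv,
        ENNReal.mul_inv (Or.inr (by norm_num)) (Or.inl (ENNReal.pow_ne_top (by norm_num))), mul_assoc]
    rw [heq]
    exact ENNReal.div_le_div_right hDle 2

lemma small_subset (hna : ∀ A : Set Ω, ¬ IsMeasAtom μ A) {B : Set Ω} (hB : MeasurableSet B)
    (h0 : 0 < μ B) (hfin : μ B < ⊤) {ε : ℝ≥0∞} (hε : ε ≠ 0) :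
    ∃ D, D ⊆ B ∧ MeasurableSet D ∧ 0 < μ D ∧ μ D ≤ ε := by
  obtain ⟨n, hn⟩ : ∃ n : ℕ, μ B / 2 ^ n ≤ ε := by
    obtain ⟨n, hn⟩ := ENNReal.exists_inv_two_pow_lt (ENNReal.div_ne_zero.2 ⟨hε, hfin.ne⟩ : ε / μ B ≠ 0)
    refine ⟨n, ?_⟩
    have h2 : μ B / 2 ^ n = 2⁻¹ ^ n * μ B := by
      rw [div_eq_mul_inv, ← ENNReal.inv_pow, mul_comm]
    rw [h2]
    calc (2⁻¹ : ℝ≥0∞) ^ n * μ B ≤ ε / μ B * μ B := by gcongr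
      _ = ε := ENNReal.div_mul_cancel h0.ne' hfin.ne
  obtain ⟨D, h1, h2, h3, h4⟩ := small_subset_pow hna hB h0 hfin n
  exact ⟨D, h1, h2, h3, h4.trans hn⟩

end S8

namespace S8
variable {Ω : Type*} [MeasurableSpace Ω] {μ : Measure Ω}

lemma exists_half (hna : ∀ A : Set Ω, ¬ IsMeasAtom μ A) {B : Set Ω} (hB : MeasurableSet B)
    (hfin : μ B < ⊤) :
    ∃ D, D ⊆ B ∧ MeasurableSet D ∧ μ D = μ B / 2 := by
  classical
  rcases eq_or_lt_of_le (show (0:ℝ≥0∞) ≤ μ B from zero_le) with h0 | h0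
  · exact ⟨∅, empty_subset _, MeasurableSet.empty, by simp [← h0]⟩
  set τ := μ B / 2 with hτdef
  have hτle : τ ≤ μ B := ENNReal.half_le_self
  have hτfin : τ < ⊤ := lt_of_le_of_lt hτle hfin
  set cand : Set Ω → Set ℝ≥0∞ :=
    fun D => {m | ∃ E, E ⊆ B \ D ∧ MeasurableSet E ∧ μ D + μ E ≤ τ ∧ μ E = m} with hcanddef
  have hstep : ∀ D : Set Ω, MeasurableSet D → μ D ≤ τ →
      ∃ E, E ⊆ B \ D ∧ MeasurableSet E ∧ μ D + μ E ≤ τ ∧ sSup (cand D) ≤ 2 * μ E := by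
    intro D hDm hDτ
    have hne : (cand D).Nonempty :=
      ⟨0, ∅, empty_subset _, MeasurableSet.empty, by simpa using hDτ, by simp⟩
    have hub : sSup (cand D) ≤ τ := by
      refine sSup_le ?_
      rintro m ⟨E, -, -, hle, rfl⟩
      exact le_trans le_add_self hle
    rcases eq_or_ne (sSup (cand D)) 0 with hz | hz
    · exact ⟨∅, empty_subset _, MeasurableSet.empty, by simpa using hDτ, by simp [hz]⟩
    · have hlt : sSup (cand D) / 2 < sSup (cand D) :=
        ENNReal.half_lt_self hz (lt_of_le_of_lt hub hτfin).ne
      obtain ⟨m, hm, hm2⟩ := exists_lt_of_lt_csSup hne hlt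
      obtain ⟨E, hE1, hE2, hE3, rfl⟩ := hm
      refine ⟨E, hE1, hE2, hE3, ?_⟩
      calc sSup (cand D) = 2 * (sSup (cand D) / 2) :=
            (ENNReal.mul_div_cancel (by norm_num) (by norm_num)).symm
        _ ≤ 2 * μ E := by gcongr
  let T := {D : Set Ω // MeasurableSet D ∧ D ⊆ B ∧ μ D ≤ τ}
  have hstep' : ∀ D : T, ∃ E : Set Ω,
      E ⊆ B \ D.1 ∧ MeasurableSet E ∧ μ D.1 + μ E ≤ τ ∧ sSup (cand D.1) ≤ 2 * μ E :=
    fun D => hstep D.1 D.2.1 D.2.2.2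
  choose F hF1 hF2 hF3 hF4 using hstep'
  let next : T → T := fun D => ⟨D.1 ∪ F D,
    D.2.1.union (hF2 D),
    union_subset D.2.2.1 ((hF1 D).trans diff_subset),
    le_trans (measure_union_le _ _) (hF3 D)⟩
  let Dseq : ℕ → T := fun n => next^[n] ⟨∅, MeasurableSet.empty, empty_subset _, by simp⟩
  have hsucc : ∀ n, Dseq (n+1) = next (Dseq n) := fun n => Function.iterate_succ_apply' next _ _
  set E : ℕ → Set Ω := fun n => F (Dseq n) with hEdef
  have hDsucc : ∀ n, (Dseq (n+1)).1 = (Dseq n).1 ∪ E n := fun n => by rw [hsucc n]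
  have hmono : Monotone (fun n => (Dseq n).1) :=
    monotone_nat_of_le_succ (fun n => by rw [hDsucc]; exact subset_union_left)
  set L := ⋃ n, (Dseq n).1 with hLdef
  have hLB : L ⊆ B := iUnion_subset fun n => (Dseq n).2.2.1
  have hLm : MeasurableSet L := MeasurableSet.iUnion fun n => (Dseq n).2.1
  have hμL : μ L = ⨆ n, μ (Dseq n).1 := (hmono.directed_le).measure_iUnion
  have hLτ : μ L ≤ τ := by rw [hμL]; exact iSup_le fun n => (Dseq n).2.2.2
  have hEDn : ∀ n, E n ⊆ B \ (Dseq n).1 := fun n => hF1 _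
  have hEsub : ∀ k n, k < n → E k ⊆ (Dseq n).1 := by
    intro k n hkn
    have h1 : E k ⊆ (Dseq (k+1)).1 := by rw [hDsucc]; exact subset_union_right
    exact h1.trans (hmono hkn)
  have hdisj : Pairwise (Function.onFun Disjoint E) := by
    intro m n hmn
    rcases lt_or_gt_of_ne hmn with h | h
    · exact Disjoint.mono (hEsub m n h) (hEDn n) disjoint_sdiff_right
    · exact (Disjoint.mono (hEsub n m h) (hEDn m) disjoint_sdiff_right).symm
  have hLE : L = ⋃ n, E n := by
    apply subset_antisymm
    · refine iUnion_subset ?_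
      intro n
      induction n with
      | zero => simp [Dseq]
      | succ k ih => rw [hDsucc]; exact union_subset ih (subset_iUnion E k)
    · refine iUnion_subset fun n => ?_
      have h1 : E n ⊆ (Dseq (n+1)).1 := by rw [hDsucc]; exact subset_union_right
      exact h1.trans (subset_iUnion (fun n => (Dseq n).1) (n+1))
  have hsum : μ L = ∑' n, μ (E n) := by
    rw [hLE]; exact measure_iUnion hdisj (fun n => hF2 _)
  have htend : Tendsto (fun n => μ (E n)) atTop (nhds 0) :=
    ENNReal.tendsto_atTop_zero_of_tsum_ne_top (hsum ▸ (lt_of_le_of_lt hLτ hτfin).ne)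
  refine ⟨L, hLB, hLm, ?_⟩
  by_contra hne
  have hLlt : μ L < τ := lt_of_le_of_ne hLτ hne
  have hε0 : τ - μ L ≠ 0 := (tsub_pos_of_lt hLlt).ne'
  have hBL0 : 0 < μ (B \ L) := by
    rw [measure_diff hLB hLm.nullMeasurableSet (lt_of_le_of_lt hLτ hτfin).ne]
    exact tsub_pos_of_lt (lt_of_lt_of_le hLlt hτle)
  obtain ⟨G, hGBL, hGm, hG0, hGε⟩ := small_subset hna (hB.diff hLm) hBL0
    (lt_of_le_of_lt (measure_mono diff_subset) hfin) hε0
  have hGfin : μ G ≠ ⊤ :=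
    (lt_of_le_of_lt (measure_mono (hGBL.trans diff_subset)) hfin).ne
  have hcand : ∀ n, μ G ∈ cand (Dseq n).1 := by
    intro n
    refine ⟨G, hGBL.trans (diff_subset_diff_right (subset_iUnion (fun n => (Dseq n).1) n)), hGm, ?_, rfl⟩
    calc μ (Dseq n).1 + μ G ≤ μ L + (τ - μ L) :=
          add_le_add (measure_mono (subset_iUnion (fun n => (Dseq n).1) n)) hGε
      _ = τ := add_tsub_cancel_of_le hLlt.le
  have hlow : ∀ n, μ G ≤ 2 * μ (E n) := fun n => le_trans (le_sSup (hcand n)) (hF4 _)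
  rw [ENNReal.tendsto_atTop_zero] at htend
  obtain ⟨n, hn⟩ := htend (μ G / 4) (ENNReal.div_pos hG0.ne' (by norm_num))
  have hEn : μ (E n) ≤ μ G / 4 := hn n le_rfl
  have hq : 2 * (μ G / 4) = μ G / 2 := by
    rw [← mul_div_assoc, show (4:ℝ≥0∞) = 2 * 2 by norm_num,
      ENNReal.mul_div_mul_left _ _ (by norm_num) (by norm_num)]
  have : μ G < μ G :=
    lt_of_le_of_lt (le_trans (hlow n) (by rw [← hq]; gcongr))
      (ENNReal.half_lt_self hG0.ne' hGfin)
  exact absurd this (lt_irrefl _)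

lemma div_mul_helper (x b c : ℝ≥0∞) (hb0 : b ≠ 0) (hbt : b ≠ ⊤) : x / (b * c) = x / b / c := by
  rw [div_eq_mul_inv, div_eq_mul_inv, div_eq_mul_inv,
    ENNReal.mul_inv (Or.inl hb0) (Or.inl hbt), mul_assoc]

lemma card_filter_flip (j : ℕ) (i : Fin j) :
    ((Finset.univ : Finset (Fin j → Bool)).filter (fun s => s i = false)).card * 2 = 2 ^ j := by
  classical
  have hbij : ((Finset.univ : Finset (Fin j → Bool)).filter (fun s => s i = false)).card =
      ((Finset.univ : Finset (Fin j → Bool)).filter (fun s => ¬ (s i = false))).card := by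
    apply Finset.card_nbij' (fun s => Function.update s i (!(s i)))
      (fun s => Function.update s i (!(s i)))
    · intro s hs
      simp only [Finset.coe_filter, Finset.mem_coe, Finset.mem_filter, Finset.mem_univ, true_and, Set.mem_setOf_eq] at hs ⊢
      simp [Function.update_self, hs]
    · intro s hs
      simp only [Finset.coe_filter, Finset.mem_coe, Finset.mem_filter, Finset.mem_univ, true_and, Set.mem_setOf_eq] at hs ⊢
      simp only [Bool.not_eq_false] at hs
      simp [Function.update_self, hs]
    · intro s _
      funext x
      by_cases hx : x = i
      · subst hx; simp [Function.update_self]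
      · simp [Function.update_of_ne hx]
    · intro s _
      funext x
      by_cases hx : x = i
      · subst hx; simp [Function.update_self]
      · simp [Function.update_of_ne hx]
  have hsum := Finset.card_filter_add_card_filter_not
    (s := (Finset.univ : Finset (Fin j → Bool))) (p := fun s => s i = false)
  have hcard : (Finset.univ : Finset (Fin j → Bool)).card = 2 ^ j := by
    rw [Finset.card_univ, Fintype.card_fun]
    simp
  calc ((Finset.univ : Finset (Fin j → Bool)).filter (fun s => s i = false)).card * 2
      = ((Finset.univ : Finset (Fin j → Bool)).filter (fun s => s i = false)).card
        + ((Finset.univ : Finset (Fin j → Bool)).filter (fun s => ¬ (s i = false))).card := by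
        rw [← hbij]; ring
    _ = 2 ^ j := by rw [hsum, hcard]

section Cells

variable (half : Set Ω → Set Ω) (A : Set Ω)

noncomputable def cellsF : (n : ℕ) → (Fin n → Bool) → Set Ω
  | 0, _ => A
  | (n+1), s =>
      if s (Fin.last n) then half (cellsF n (s ∘ Fin.castSucc))
      else cellsF n (s ∘ Fin.castSucc) \ half (cellsF n (s ∘ Fin.castSucc))

noncomputable def RadF (n : ℕ) : Set Ω :=
  ⋃ s : Fin n → Bool, half (cellsF half A n s)

variable {half A}
variable (hhalf : ∀ B : Set Ω, MeasurableSet B → μ B < ⊤ →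
    half B ⊆ B ∧ MeasurableSet (half B) ∧ μ (half B) = μ B / 2)
  (hA : MeasurableSet A) (hAf : μ A < ⊤)

lemma cellsF_true {n : ℕ} {s : Fin (n+1) → Bool} (hb : s (Fin.last n) = true) :
    cellsF half A (n+1) s = half (cellsF half A n (s ∘ Fin.castSucc)) := by
  simp [cellsF, hb]

lemma cellsF_false {n : ℕ} {s : Fin (n+1) → Bool} (hb : s (Fin.last n) = false) :
    cellsF half A (n+1) s = cellsF half A n (s ∘ Fin.castSucc) \
      half (cellsF half A n (s ∘ Fin.castSucc)) := by
  simp [cellsF, hb]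

include hhalf hA hAf

lemma cells_spec : ∀ n (s : Fin n → Bool), cellsF half A n s ⊆ A ∧
    MeasurableSet (cellsF half A n s) ∧ μ (cellsF half A n s) = μ A / 2 ^ n := by
  intro n
  induction n with
  | zero => intro s; exact ⟨subset_rfl, hA, by simp [cellsF]⟩
  | succ n ih =>
    intro s
    obtain ⟨hsub, hm, hμ⟩ := ih (s ∘ Fin.castSucc)
    have hfin' : μ (cellsF half A n (s ∘ Fin.castSucc)) < ⊤ := by
      rw [hμ]
      exact ENNReal.div_lt_top hAf.ne (by positivity)
    obtain ⟨hh1, hh2, hh3⟩ := hhalf _ hm hfin'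
    have hpow : μ A / 2 ^ (n+1) = μ A / 2 ^ n / 2 := by
      rw [pow_succ, div_mul_helper _ _ _ (by positivity) (ENNReal.pow_ne_top (by norm_num))]
    rcases Bool.eq_false_or_eq_true (s (Fin.last n)) with hb | hb
    · rw [cellsF_true hb]
      exact ⟨hh1.trans hsub, hh2, by rw [hh3, hμ, hpow]⟩
    · rw [cellsF_false hb]
      refine ⟨diff_subset.trans hsub, hm.diff hh2, ?_⟩
      rw [measure_diff hh1 hh2.nullMeasurableSet (by rw [hh3]; exact (lt_of_le_of_lt
          (ENNReal.half_le_self) hfin').ne), hh3, ENNReal.sub_half hfin'.ne, hμ, hpow]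

lemma cells_succ_subset (n : ℕ) (s : Fin (n+1) → Bool) :
    cellsF half A (n+1) s ⊆ cellsF half A n (s ∘ Fin.castSucc) := by
  obtain ⟨-, hm, hμ⟩ := cells_spec hhalf hA hAf n (s ∘ Fin.castSucc)
  have hfin' : μ (cellsF half A n (s ∘ Fin.castSucc)) < ⊤ := by
    rw [hμ]; exact ENNReal.div_lt_top hAf.ne (by positivity)
  obtain ⟨hh1, -, -⟩ := hhalf _ hm hfin'
  rcases Bool.eq_false_or_eq_true (s (Fin.last n)) with hb | hb
  · rw [cellsF_true hb]; exact hh1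
  · rw [cellsF_false hb]; exact diff_subset

lemma cells_disj : ∀ n (s t : Fin n → Bool), s ≠ t →
    Disjoint (cellsF half A n s) (cellsF half A n t) := by
  intro n
  induction n with
  | zero =>
    intro s t hst
    exact absurd (funext fun x => x.elim0) hst
  | succ n ih =>
    intro s t hst
    by_cases hres : s ∘ Fin.castSucc = t ∘ Fin.castSucc
    · have hlast : s (Fin.last n) ≠ t (Fin.last n) := by
        intro hEq
        apply hst
        funext x
        induction x using Fin.lastCases with
        | last => exact hEq
        | cast i => exact congrFun hres i
      rcases Bool.eq_false_or_eq_true (s (Fin.last n)) with hs | hs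
      · have ht : t (Fin.last n) = false := by
          rcases Bool.eq_false_or_eq_true (t (Fin.last n)) with h | h
          · exact absurd (hs.trans h.symm) hlast
          · exact h
        rw [cellsF_true hs, cellsF_false ht, hres]
        exact disjoint_sdiff_right
      · have ht : t (Fin.last n) = true := by
          rcases Bool.eq_false_or_eq_true (t (Fin.last n)) with h | h
          · exact h
          · exact absurd (hs.trans h.symm) hlast
        rw [cellsF_false hs, cellsF_true ht, hres]
        exact disjoint_sdiff_left
    · exact (ih _ _ hres).mono (cells_succ_subset hhalf hA hAf n s)
        (cells_succ_subset hhalf hA hAf n t)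

lemma cells_castLE : ∀ n (i : ℕ) (h : i ≤ n) (s : Fin n → Bool),
    cellsF half A n s ⊆ cellsF half A i (s ∘ Fin.castLE h) := by
  intro n
  induction n with
  | zero =>
    intro i h s
    obtain rfl : i = 0 := Nat.le_zero.1 h
    exact subset_rfl
  | succ n ih =>
    intro i h s
    rcases Nat.eq_or_lt_of_le h with rfl | hlt
    · have : s ∘ Fin.castLE (le_refl (n+1)) = s := funext fun x => rfl
      rw [this]
    · have h' : i ≤ n := Nat.lt_succ_iff.1 hlt
      have hcomp : (s ∘ Fin.castSucc) ∘ Fin.castLE h' = s ∘ Fin.castLE h :=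
        funext fun x => rfl
      exact (cells_succ_subset hhalf hA hAf n s).trans (hcomp ▸ ih i h' (s ∘ Fin.castSucc))

lemma Rad_meas (n : ℕ) : MeasurableSet (RadF half A n) := by
  apply MeasurableSet.iUnion
  intro s
  obtain ⟨-, hm, hμ⟩ := cells_spec hhalf hA hAf n s
  exact (hhalf _ hm (by rw [hμ]; exact ENNReal.div_lt_top hAf.ne (by positivity))).2.1

lemma Rad_subset (n : ℕ) : RadF half A n ⊆ A := by
  apply iUnion_subset
  intro s
  obtain ⟨hsub, hm, hμ⟩ := cells_spec hhalf hA hAf n s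
  exact ((hhalf _ hm (by rw [hμ]; exact ENNReal.div_lt_top hAf.ne (by positivity))).1).trans hsub

lemma Rad_mem (i j : ℕ) (hij : i < j) (s : Fin j → Bool) :
    (s ⟨i, hij⟩ = true → cellsF half A j s ⊆ RadF half A i) ∧
    (s ⟨i, hij⟩ = false → Disjoint (cellsF half A j s) (RadF half A i)) := by
  have hle : i + 1 ≤ j := hij
  set t := s ∘ Fin.castLE hle with htdef
  have hsubt : cellsF half A j s ⊆ cellsF half A (i+1) t := cells_castLE hhalf hA hAf j (i+1) hle s
  have hlastt : t (Fin.last i) = s ⟨i, hij⟩ := rfl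
  obtain ⟨-, hmB, hμB⟩ := cells_spec hhalf hA hAf i (t ∘ Fin.castSucc)
  have hfinB : μ (cellsF half A i (t ∘ Fin.castSucc)) < ⊤ := by
    rw [hμB]; exact ENNReal.div_lt_top hAf.ne (by positivity)
  obtain ⟨hh1, -, -⟩ := hhalf _ hmB hfinB
  constructor
  · intro hb
    have : cellsF half A (i+1) t = half (cellsF half A i (t ∘ Fin.castSucc)) :=
      cellsF_true (by rw [hlastt, hb])
    refine hsubt.trans (this ▸ ?_)
    exact subset_iUnion (fun u => half (cellsF half A i u)) (t ∘ Fin.castSucc)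
  · intro hb
    have hEq : cellsF half A (i+1) t =
        cellsF half A i (t ∘ Fin.castSucc) \ half (cellsF half A i (t ∘ Fin.castSucc)) :=
      cellsF_false (by rw [hlastt, hb])
    refine Disjoint.mono_left (hsubt.trans (le_of_eq hEq)) ?_
    apply disjoint_iUnion_right.2
    intro u
    by_cases hu : u = t ∘ Fin.castSucc
    · subst hu
      exact disjoint_sdiff_left
    · obtain ⟨-, hmu, hμu⟩ := cells_spec hhalf hA hAf i u
      have := cells_disj hhalf hA hAf i (t ∘ Fin.castSucc) u (fun h => hu h.symm)
      exact this.mono diff_subset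
        (hhalf _ hmu (by rw [hμu]; exact ENNReal.div_lt_top hAf.ne (by positivity))).1

lemma Rad_half_spec (n : ℕ) (s : Fin n → Bool) :
    MeasurableSet (half (cellsF half A n s)) ∧
    μ (half (cellsF half A n s)) = μ A / 2 ^ (n+1) ∧
    half (cellsF half A n s) ⊆ cellsF half A n s := by
  obtain ⟨hsub, hm, hμc⟩ := cells_spec hhalf hA hAf n s
  obtain ⟨h1, h2, h3⟩ := hhalf _ hm (by rw [hμc]; exact ENNReal.div_lt_top hAf.ne (by positivity))
  refine ⟨h2, ?_, h1⟩
  rw [h3, hμc, pow_succ, div_mul_helper _ _ _ (by positivity) (ENNReal.pow_ne_top (by norm_num))]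

lemma Rad_diff (i j : ℕ) (hij : i < j) :
    μ (RadF half A j \ RadF half A i) = μ A / 4 := by
  classical
  have hdiffEq : RadF half A j \ RadF half A i =
      ⋃ s : Fin j → Bool, (if s ⟨i, hij⟩ = false then half (cellsF half A j s) else ∅) := by
    rw [RadF, iUnion_diff]
    apply iUnion_congr
    intro s
    rcases Bool.eq_false_or_eq_true (s ⟨i, hij⟩) with hb | hb
    · rw [if_neg (by simp [hb]), diff_eq_empty]
      exact ((Rad_half_spec hhalf hA hAf j s).2.2).trans ((Rad_mem hhalf hA hAf i j hij s).1 hb)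
    · rw [if_pos hb]
      exact Disjoint.sdiff_eq_left (Disjoint.mono_left (Rad_half_spec hhalf hA hAf j s).2.2
        ((Rad_mem hhalf hA hAf i j hij s).2 hb))
  have hitesub : ∀ s : Fin j → Bool,
      (if s ⟨i, hij⟩ = false then half (cellsF half A j s) else ∅) ⊆ half (cellsF half A j s) := by
    intro s; split
    · exact subset_rfl
    · exact empty_subset _
  have hmeas : ∀ s : Fin j → Bool,
      MeasurableSet (if s ⟨i, hij⟩ = false then half (cellsF half A j s) else ∅) := by
    intro s; split
    · exact (Rad_half_spec hhalf hA hAf j s).1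
    · exact MeasurableSet.empty
  have hdisj : Pairwise (Function.onFun Disjoint
      (fun s : Fin j → Bool => if s ⟨i, hij⟩ = false then half (cellsF half A j s) else ∅)) := by
    intro s t hst
    exact Disjoint.mono (hitesub s) (hitesub t)
      ((cells_disj hhalf hA hAf j s t hst).mono (Rad_half_spec hhalf hA hAf j s).2.2
        (Rad_half_spec hhalf hA hAf j t).2.2)
  rw [hdiffEq, measure_iUnion hdisj hmeas, tsum_fintype]
  have hterm : ∀ s : Fin j → Bool,
      μ (if s ⟨i, hij⟩ = false then half (cellsF half A j s) else ∅) =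
      if s ⟨i, hij⟩ = false then μ A / 2 ^ (j+1) else 0 := by
    intro s; split
    · exact (Rad_half_spec hhalf hA hAf j s).2.1
    · exact measure_empty
  rw [Finset.sum_congr rfl (fun s _ => hterm s), ← Finset.sum_filter, Finset.sum_const,
    nsmul_eq_mul]
  set c : ℕ := ((Finset.univ : Finset (Fin j → Bool)).filter (fun s => s ⟨i, hij⟩ = false)).card
    with hcdef
  have hc2 : c * 2 = 2 ^ j := card_filter_flip j ⟨i, hij⟩
  have hc0 : (c : ℝ≥0∞) ≠ 0 := by
    have : c ≠ 0 := by
      intro h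
      rw [h, zero_mul] at hc2
      exact absurd hc2.symm (pow_pos (by norm_num : (0:ℕ) < 2) j).ne'
    exact_mod_cast this
  have hct : (c : ℝ≥0∞) ≠ ⊤ := ENNReal.natCast_ne_top c
  have h2j : (2 : ℝ≥0∞) ^ (j+1) = (c : ℝ≥0∞) * 4 := by
    have : ((2:ℕ) : ℝ≥0∞) ^ (j+1) = (((2:ℕ)^(j+1) : ℕ) : ℝ≥0∞) := by push_cast; ring
    rw [show ((2:ℝ≥0∞)) = ((2:ℕ):ℝ≥0∞) by norm_num, this,
      show (2:ℕ)^(j+1) = c * 4 by rw [pow_succ, ← hc2]; ring]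
    push_cast; ring
  rw [h2j, div_mul_helper _ _ _ hc0 hct, ← mul_div_assoc, ENNReal.mul_div_cancel hc0 hct]

end Cells

end S8


namespace S8
variable {Ω : Type*} [MeasurableSpace Ω] {μ : Measure Ω}

lemma modular_indicator {Φ : ℝ → ℝ} (hΦ : IsYoung Φ) {E : Set Ω} [DecidablePred (· ∈ E)]
    (hE : MeasurableSet E) {b : ℝ} (hb : 0 ≤ b) :
    orliczModular Φ μ (fun x => if x ∈ E then ((b : ℝ) : ℂ) else 0) =
      ENNReal.ofReal (Φ b) * μ E := by
  rw [orliczModular]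
  have heq : (fun x => ENNReal.ofReal (Φ ‖(if x ∈ E then ((b:ℝ):ℂ) else 0)‖)) =
      E.indicator (fun _ => ENNReal.ofReal (Φ b)) := by
    funext x
    by_cases hx : x ∈ E
    · simp [hx, Complex.norm_real, abs_of_nonneg hb]
    · simp [hx, young_zero hΦ]
  rw [heq, lintegral_indicator hE, setLIntegral_const]

lemma finite_level {Φ : ℝ → ℝ} (hΦ : IsYoung Φ) {g : Ω → ℂ} {k c : ℝ} (hk : 0 < k) (hc : 0 < c)
    (hint : orliczModular Φ μ (fun x => (k:ℂ) * g x) < ⊤)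
    {W : Set Ω} (hW : MeasurableSet W) (hWg : ∀ x ∈ W, c ≤ ‖g x‖) : μ W < ⊤ := by
  set p := Φ (k * c) with hpdef
  have hp : 0 < p := young_pos hΦ (by positivity)
  have hle : W.indicator (fun _ => ENNReal.ofReal p) ≤
      fun x => ENNReal.ofReal (Φ ‖(k:ℂ) * g x‖) := by
    intro x
    by_cases hx : x ∈ W
    · rw [indicator_of_mem hx]
      apply ENNReal.ofReal_le_ofReal
      apply young_mono hΦ (by positivity)
      rw [norm_mul, Complex.norm_real, Real.norm_eq_abs, abs_of_pos hk]
      exact mul_le_mul_of_nonneg_left (hWg x hx) hk.le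
    · rw [indicator_of_notMem hx]; exact zero_le
  have hmono := lintegral_mono (μ := μ) hle
  rw [lintegral_indicator hW, setLIntegral_const] at hmono
  have hlt : ENNReal.ofReal p * μ W < ⊤ := lt_of_le_of_lt hmono hint
  by_contra htop
  push_neg at htop
  rw [top_le_iff.1 htop, ENNReal.mul_top (by
    simp only [ne_eq, ENNReal.ofReal_eq_zero, not_le]; exact hp)] at hlt
  exact absurd hlt (lt_irrefl ⊤)

end S8


/-- On a non-atomic measure space there is no nonzero compact composition operator:
compactness of `C_φ` forces `C_φ = 0`. -/
theorem stmt8 {Ω : Type*} [MeasurableSpace Ω] (μ : Measure Ω) [SigmaFinite μ]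
    (hna : ∀ A : Set Ω, ¬ IsMeasAtom μ A)
    (Φ₁ Φ₂ : ℝ → ℝ) (hΦ₁ : IsYoung Φ₁) (hΦ₂ : IsYoung Φ₂)
    (φ : Ω → Ω) (hφ : Measurable φ)
    (hns : ∀ A : Set Ω, MeasurableSet A → μ A = 0 → μ (φ ⁻¹' A) = 0)
    (C : ℝ) (hC : 0 ≤ C)
    (hbdd : ∀ f : Ω → ℂ, MemOrlicz Φ₁ μ f →
      MemOrlicz Φ₂ μ (f ∘ φ) ∧ luxNorm Φ₂ μ (f ∘ φ) ≤ C * luxNorm Φ₁ μ f)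
    (hcpt : CompactOp Φ₁ Φ₂ μ (fun f => f ∘ φ)) :
    ∀ f : Ω → ℂ, MemOrlicz Φ₁ μ f → (f ∘ φ) =ᵐ[μ] (fun _ => (0 : ℂ)) := by
  classical
  intro f hf
  by_contra hae
  obtain ⟨hfm, k₁, hk₁, hint₁⟩ := hf
  obtain ⟨⟨hfφm, k₂, hk₂, hint₂⟩, -⟩ := hbdd f ⟨hfm, k₁, hk₁, hint₁⟩
  -- Step 1 : a level set with positive pull-back measure
  rw [Filter.EventuallyEq, ae_iff] at hae
  have habsf : Measurable (fun ω => ‖f ω‖) := continuous_norm.measurable.comp hfm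
  set Alev : ℕ → Set Ω := fun m => {ω | 1/((m:ℝ)+1) ≤ ‖f ω‖} with hAlevdef
  have hAlevm : ∀ m, MeasurableSet (Alev m) := fun m => habsf measurableSet_Ici
  have hcover : {x | ¬ (f ∘ φ) x = (fun _ => (0:ℂ)) x} ⊆ ⋃ m, φ ⁻¹' (Alev m) := by
    intro x hx
    have h0 : f (φ x) ≠ 0 := hx
    have hpos : 0 < ‖f (φ x)‖ := norm_pos_iff.2 h0
    obtain ⟨m, hm⟩ := exists_nat_one_div_lt hpos
    exact mem_iUnion.2 ⟨m, hm.le⟩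
  obtain ⟨m, hA0⟩ : ∃ m, μ (φ ⁻¹' (Alev m)) ≠ 0 := by
    by_contra hforall
    push_neg at hforall
    exact hae (measure_mono_null hcover (measure_iUnion_null hforall))
  set c : ℝ := 1/((m:ℝ)+1) with hcdef
  have hc : 0 < c := by positivity
  set A : Set Ω := Alev m with hAdef
  have hAm : MeasurableSet A := hAlevm m
  have hAc : ∀ x ∈ A, c ≤ ‖f x‖ := fun x hx => hx
  -- Step 2 : finiteness
  have hAfin : μ A < ⊤ := S8.finite_level hΦ₁ hk₁ hc hint₁ hAm hAc
  have hVfin : μ (φ ⁻¹' A) < ⊤ := by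
    refine S8.finite_level hΦ₂ hk₂ hc hint₂ (hφ hAm) ?_
    intro x hx
    exact hAc (φ x) hx
  -- Step 3 : Radon–Nikodym and the density lower-bound set A'
  set ν : Measure Ω := Measure.map φ μ with hνdef
  set ρ : Measure Ω := ν.restrict A with hρdef
  have hρuniv : ρ Set.univ = μ (φ ⁻¹' A) := by
    rw [hρdef, Measure.restrict_apply_univ, hνdef, Measure.map_apply hφ hAm]
  haveI : IsFiniteMeasure ρ := ⟨by rw [hρuniv]; exact hVfin⟩
  have hac : ρ ≪ μ := by
    refine Measure.AbsolutelyContinuous.mk ?_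
    intro E hE hE0
    rw [hρdef, Measure.restrict_apply hE, hνdef, Measure.map_apply hφ (hE.inter hAm)]
    exact hns _ (hE.inter hAm) (measure_mono_null inter_subset_left hE0)
  set h : Ω → ℝ≥0∞ := ρ.rnDeriv μ with hhdef
  have hhm : Measurable h := Measure.measurable_rnDeriv ρ μ
  have hwd : μ.withDensity h = ρ := Measure.withDensity_rnDeriv_eq ρ μ hac
  have hρ_int : ∀ G, MeasurableSet G → ρ G = ∫⁻ x in G, h x ∂μ := by
    intro G hG
    rw [← hwd, withDensity_apply _ hG]
  have hρA : ρ A ≠ 0 := by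
    rw [hρdef, Measure.restrict_apply hAm, inter_self, hνdef, Measure.map_apply hφ hAm]
    exact hA0
  have hcover2 : A ⊆ (A ∩ {x | h x = 0}) ∪ ⋃ n : ℕ, (A ∩ {x | ((n:ℝ≥0∞))⁻¹ ≤ h x}) := by
    intro x hx
    rcases eq_or_ne (h x) 0 with h0 | h0
    · exact Or.inl ⟨hx, h0⟩
    · obtain ⟨n, hn⟩ := ENNReal.exists_inv_nat_lt h0
      exact Or.inr (mem_iUnion.2 ⟨n, hx, hn.le⟩)
  have hz : ρ (A ∩ {x | h x = 0}) = 0 := by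
    have hGm : MeasurableSet (A ∩ {x | h x = 0}) := hAm.inter (hhm (measurableSet_singleton 0))
    rw [hρ_int _ hGm, setLIntegral_congr_fun hGm (fun x hx => hx.2), lintegral_zero]
  obtain ⟨n, hηset⟩ : ∃ n : ℕ, ρ (A ∩ {x | ((n:ℝ≥0∞))⁻¹ ≤ h x}) ≠ 0 := by
    by_contra hforall
    push_neg at hforall
    apply hρA
    have h1 : ρ A ≤ ρ (A ∩ {x | h x = 0}) + ρ (⋃ n : ℕ, (A ∩ {x | ((n:ℝ≥0∞))⁻¹ ≤ h x})) :=
      le_trans (measure_mono hcover2) (measure_union_le _ _)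
    rw [hz, measure_iUnion_null hforall, add_zero] at h1
    exact le_antisymm h1 zero_le
  set η : ℝ≥0∞ := min ((n:ℝ≥0∞))⁻¹ 1 with hηdef
  have hη0 : η ≠ 0 := by
    have h1 : (0:ℝ≥0∞) < ((n:ℝ≥0∞))⁻¹ := ENNReal.inv_pos.2 (ENNReal.natCast_ne_top n)
    exact (lt_min h1 zero_lt_one).ne'
  have hη1 : η ≤ 1 := min_le_right _ _
  have hηtop : η ≠ ⊤ := (lt_of_le_of_lt hη1 ENNReal.one_lt_top).ne
  set A' : Set Ω := A ∩ {x | ((n:ℝ≥0∞))⁻¹ ≤ h x} with hA'def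
  have hA'm : MeasurableSet A' := hAm.inter (hhm measurableSet_Ici)
  have hA'A : A' ⊆ A := inter_subset_left
  have hA'fin : μ A' < ⊤ := lt_of_le_of_lt (measure_mono hA'A) hAfin
  have hA'0 : μ A' ≠ 0 := by
    intro h0
    exact hηset (by rw [hρ_int _ hA'm, setLIntegral_measure_zero _ _ h0])
  have hν_lower : ∀ G : Set Ω, MeasurableSet G → G ⊆ A' → η * μ G ≤ μ (φ ⁻¹' G) := by
    intro G hG hGA'
    have h1 : μ (φ ⁻¹' G) = ρ G := by
      rw [hρdef, Measure.restrict_apply hG,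
        inter_eq_self_of_subset_left (hGA'.trans hA'A), hνdef, Measure.map_apply hφ hG]
    rw [h1, hρ_int G hG]
    calc η * μ G = ∫⁻ _ in G, η ∂μ := (setLIntegral_const G η).symm
      _ ≤ ∫⁻ x in G, h x ∂μ := by
          apply lintegral_mono_ae
          rw [ae_restrict_iff' hG]
          exact ae_of_all _ (fun x hx => le_trans (min_le_left _ _) (hGA' hx).2)
  -- Step 4 : amplitude a
  set tA : ℝ := (μ A').toReal with htAdef
  have htA : μ A' = ENNReal.ofReal tA := (ENNReal.ofReal_toReal hA'fin.ne).symm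
  obtain ⟨a, ha, hasmall⟩ := young_small hΦ₁ (show (0:ℝ) < 1/(tA+1) by positivity)
  have hΦ₁a : ENNReal.ofReal (Φ₁ a) * μ A' ≤ 1 := by
    calc ENNReal.ofReal (Φ₁ a) * μ A' ≤ ENNReal.ofReal (1/(tA+1)) * ENNReal.ofReal tA := by
          rw [htA]
          gcongr
          exact (hasmall a ha.le le_rfl).le
      _ = ENNReal.ofReal ((1/(tA+1)) * tA) := (ENNReal.ofReal_mul (by positivity)).symm
      _ ≤ 1 := by
          rw [ENNReal.ofReal_le_one]
          rw [div_mul_eq_mul_div, one_mul, div_le_one (by positivity)]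
          linarith [ENNReal.toReal_nonneg (a := μ A')]
  -- Step 5 : halving function and Rademacher sets
  have hhalfex : ∀ B : Set Ω, ∃ D, (MeasurableSet B ∧ μ B < ⊤) →
      (D ⊆ B ∧ MeasurableSet D ∧ μ D = μ B / 2) := by
    intro B
    by_cases hB : MeasurableSet B ∧ μ B < ⊤
    · obtain ⟨D, h1, h2, h3⟩ := S8.exists_half hna hB.1 hB.2
      exact ⟨D, fun _ => ⟨h1, h2, h3⟩⟩
    · exact ⟨∅, fun hcon => absurd hcon hB⟩
  choose half hhalfc using hhalfex
  have hhalf : ∀ B : Set Ω, MeasurableSet B → μ B < ⊤ →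
      half B ⊆ B ∧ MeasurableSet (half B) ∧ μ (half B) = μ B / 2 :=
    fun B h1 h2 => hhalfc B ⟨h1, h2⟩
  set R : ℕ → Set Ω := S8.RadF half A' with hRdef
  have hRm : ∀ n, MeasurableSet (R n) := fun n => S8.Rad_meas hhalf hA'm hA'fin n
  have hRsub : ∀ n, R n ⊆ A' := fun n => S8.Rad_subset hhalf hA'm hA'fin n
  have hRdiff : ∀ i j, i < j → μ (R j \ R i) = μ A' / 4 :=
    fun i j hij => S8.Rad_diff hhalf hA'm hA'fin i j hij
  -- Step 6 : test functions
  set u : ℕ → Ω → ℂ := fun n x => if x ∈ R n then ((a:ℝ):ℂ) else 0 with hudef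
  have humeas : ∀ n, Measurable (u n) :=
    fun n => Measurable.ite (hRm n) measurable_const measurable_const
  have humod : ∀ n (k : ℝ), 0 < k →
      orliczModular Φ₁ μ (fun x => u n x / (k:ℂ)) = ENNReal.ofReal (Φ₁ (a/k)) * μ (R n) := by
    intro n k hk
    have heq : (fun x => u n x / (k:ℂ)) = (fun x => if x ∈ R n then ((a/k : ℝ):ℂ) else 0) := by
      funext x
      by_cases hx : x ∈ R n
      · simp only [hudef, hx, if_true]
        push_cast
        ring
      · simp [hudef, hx]
    rw [heq, S8.modular_indicator hΦ₁ (hRm n) (by positivity)]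
  have hunit : ∀ n, MemOrlicz Φ₁ μ (u n) ∧ luxNorm Φ₁ μ (u n) ≤ 1 := by
    intro n
    have hmem1 : (1:ℝ) ∈ {k : ℝ | 0 < k ∧ orliczModular Φ₁ μ (fun x => u n x / (k:ℂ)) ≤ 1} := by
      refine ⟨one_pos, ?_⟩
      rw [humod n 1 one_pos]
      calc ENNReal.ofReal (Φ₁ (a/1)) * μ (R n) ≤ ENNReal.ofReal (Φ₁ a) * μ A' := by
            rw [div_one]
            gcongr
            exact hRsub n
        _ ≤ 1 := hΦ₁a
    constructor
    · refine ⟨humeas n, 1, one_pos, ?_⟩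
      have h1 : (fun x => (((1:ℝ)):ℂ) * u n x) = fun x => u n x / ((1:ℝ):ℂ) := by
        funext x; norm_num
      rw [h1, humod n 1 one_pos]
      exact lt_of_le_of_lt (by
        calc ENNReal.ofReal (Φ₁ (a/1)) * μ (R n) ≤ ENNReal.ofReal (Φ₁ a) * μ A' := by
              rw [div_one]; gcongr; exact hRsub n
          _ ≤ 1 := hΦ₁a) ENNReal.one_lt_top
    · exact csInf_le ⟨0, fun x hx => hx.1.le⟩ hmem1
  obtain ⟨g, hgmono, hcauchy⟩ := hcpt u hunit
  -- Step 7 : quantities for the contradiction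
  set c₀ : ℝ≥0∞ := η * (μ A' / 4) with hc₀def
  have hc₀0 : c₀ ≠ 0 := mul_ne_zero hη0 (ENNReal.div_ne_zero.2 ⟨hA'0, by norm_num⟩)
  have hc₀top : c₀ ≠ ⊤ :=
    ENNReal.mul_ne_top hηtop (ENNReal.div_lt_top hA'fin.ne (by norm_num)).ne
  set M : ℝ := (c₀⁻¹).toReal + 1 with hMdef
  have hM : 1 < ENNReal.ofReal M * c₀ := by
    have hinvfin : c₀⁻¹ ≠ ⊤ := ENNReal.inv_ne_top.2 hc₀0
    have hlt : c₀⁻¹ < ENNReal.ofReal M := by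
      conv_lhs => rw [← ENNReal.ofReal_toReal hinvfin]
      rw [ENNReal.ofReal_lt_ofReal_iff (by positivity)]
      linarith [ENNReal.toReal_nonneg (a := c₀⁻¹)]
    calc (1:ℝ≥0∞) = c₀⁻¹ * c₀ := (ENNReal.inv_mul_cancel hc₀0 hc₀top).symm
      _ < ENNReal.ofReal M * c₀ := by
        rw [mul_comm c₀⁻¹, mul_comm (ENNReal.ofReal M)]; exact ENNReal.mul_lt_mul_right hc₀0 hc₀top hlt
  obtain ⟨b, hb, hbM⟩ := young_large hΦ₂ M
  set ε₀ : ℝ := a / b with hε₀def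
  have hε₀ : 0 < ε₀ := div_pos ha hb
  -- Step 8 : apply compactness
  obtain ⟨N, hN⟩ := hcauchy (ε₀/2) (by positivity)
  set i := g N with hidef
  set j := g (N+1) with hjdef
  have hij : i < j := hgmono (Nat.lt_succ_self N)
  have hdiffnorm : luxNorm Φ₂ μ (fun x => u i (φ x) - u j (φ x)) ≤ ε₀/2 :=
    hN N le_rfl (N+1) (Nat.le_succ N)
  set d : Ω → ℂ := fun x => u i (φ x) - u j (φ x) with hddef
  -- abs bounds on d
  have hdabs : ∀ x, ‖d x‖ ≤ a := by
    intro x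
    by_cases h1 : φ x ∈ R i <;> by_cases h2 : φ x ∈ R j <;>
      simp [hddef, hudef, h1, h2, Complex.norm_real, abs_of_pos ha, ha.le]
  have hdW : ∀ x, x ∈ φ ⁻¹' (R j \ R i) → ‖d x‖ = a := by
    intro x hx
    have h1 : φ x ∉ R i := hx.2
    have h2 : φ x ∈ R j := hx.1
    simp [hddef, hudef, h1, h2, Complex.norm_real, abs_of_pos ha]
  have hdzero : ∀ x, φ x ∉ A → d x = 0 := by
    intro x hx
    have h1 : φ x ∉ R i := fun hh => hx (hA'A (hRsub i hh))
    have h2 : φ x ∉ R j := fun hh => hx (hA'A (hRsub j hh))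
    simp [hddef, hudef, h1, h2]
  set W : Set Ω := φ ⁻¹' (R j \ R i) with hWdef
  have hWm : MeasurableSet W := hφ ((hRm j).diff (hRm i))
  -- lower bound for modular of d/k
  have hlowbound : ∀ k : ℝ, 0 < k →
      ENNReal.ofReal (Φ₂ (a/k)) * μ W ≤ orliczModular Φ₂ μ (fun x => d x / (k:ℂ)) := by
    intro k hk
    have hptw : W.indicator (fun _ => ENNReal.ofReal (Φ₂ (a/k))) ≤
        fun x => ENNReal.ofReal (Φ₂ ‖d x / (k:ℂ)‖) := by
      intro x
      by_cases hx : x ∈ W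
      · rw [indicator_of_mem hx]
        apply ENNReal.ofReal_le_ofReal
        apply le_of_eq
        congr 1
        rw [norm_div, Complex.norm_real, Real.norm_eq_abs, abs_of_pos hk, hdW x hx]
      · rw [indicator_of_notMem hx]; exact zero_le
    have hlm := lintegral_mono (μ := μ) hptw
    rw [lintegral_indicator hWm, setLIntegral_const] at hlm
    exact hlm
  -- upper bound for modular of d/K
  have hupbound : ∀ K : ℝ, 0 < K →
      orliczModular Φ₂ μ (fun x => d x / (K:ℂ)) ≤
        ENNReal.ofReal (Φ₂ (a/K)) * μ (φ ⁻¹' A) := by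
    intro K hK
    have hptw : (fun x => ENNReal.ofReal (Φ₂ ‖d x / (K:ℂ)‖)) ≤
        (φ ⁻¹' A).indicator (fun _ => ENNReal.ofReal (Φ₂ (a/K))) := by
      intro x
      by_cases hx : x ∈ φ ⁻¹' A
      · rw [indicator_of_mem hx]
        apply ENNReal.ofReal_le_ofReal
        apply young_mono hΦ₂ (by positivity)
        rw [norm_div, Complex.norm_real, Real.norm_eq_abs, abs_of_pos hK]
        gcongr
        exact hdabs x
      · rw [indicator_of_notMem hx]
        have h0 : d x = 0 := hdzero x hx
        simp [h0, young_zero hΦ₂]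
    have hlm := lintegral_mono (μ := μ) hptw
    rw [lintegral_indicator (hφ hAm), setLIntegral_const] at hlm
    exact hlm
  -- the feasibility set for d is nonempty
  set S₂ : Set ℝ := {k : ℝ | 0 < k ∧ orliczModular Φ₂ μ (fun x => d x / (k:ℂ)) ≤ 1} with hS₂def
  have hS₂ne : S₂.Nonempty := by
    set tV : ℝ := (μ (φ ⁻¹' A)).toReal with htVdef
    have htV : μ (φ ⁻¹' A) = ENNReal.ofReal tV := (ENNReal.ofReal_toReal hVfin.ne).symm
    obtain ⟨a₂, ha₂, ha₂small⟩ := young_small hΦ₂ (show (0:ℝ) < 1/(tV+1) by positivity)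
    refine ⟨a/a₂, div_pos ha ha₂, ?_⟩
    have haK : a / (a/a₂) = a₂ := by
      field_simp
    calc orliczModular Φ₂ μ (fun x => d x / ((a/a₂ : ℝ):ℂ)) ≤
          ENNReal.ofReal (Φ₂ (a/(a/a₂))) * μ (φ ⁻¹' A) := hupbound _ (div_pos ha ha₂)
      _ = ENNReal.ofReal (Φ₂ a₂) * μ (φ ⁻¹' A) := by rw [haK]
      _ ≤ ENNReal.ofReal (1/(tV+1)) * ENNReal.ofReal tV := by
          rw [htV]
          gcongr
          exact (ha₂small a₂ ha₂.le le_rfl).le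
      _ = ENNReal.ofReal ((1/(tV+1)) * tV) := (ENNReal.ofReal_mul (by positivity)).symm
      _ ≤ 1 := by
          rw [ENNReal.ofReal_le_one, div_mul_eq_mul_div, one_mul, div_le_one (by positivity)]
          linarith [ENNReal.toReal_nonneg (a := μ (φ ⁻¹' A))]
  -- extract k < ε₀ in the feasibility set
  have hsInf : sInf S₂ ≤ ε₀/2 := hdiffnorm
  obtain ⟨k, hkS, hkε⟩ := exists_lt_of_csInf_lt hS₂ne
    (lt_of_le_of_lt hsInf (by linarith : ε₀/2 < ε₀))
  -- final contradiction
  have hμW : c₀ ≤ μ W := by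
    have hGsub : R j \ R i ⊆ A' := (diff_subset).trans (hRsub j)
    have := hν_lower (R j \ R i) ((hRm j).diff (hRm i)) hGsub
    rw [hRdiff i j hij] at this
    exact this
  have hMk : M ≤ Φ₂ (a/k) := by
    apply hbM
    rw [hε₀def] at hkε
    have hkb : k * b ≤ a := (le_div_iff₀ hb).1 hkε.le
    rw [le_div_iff₀ hkS.1]
    linarith
  have hcontr : (1:ℝ≥0∞) < 1 :=
    calc (1:ℝ≥0∞) < ENNReal.ofReal M * c₀ := hM
      _ ≤ ENNReal.ofReal (Φ₂ (a/k)) * μ W := by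
          gcongr
      _ ≤ orliczModular Φ₂ μ (fun x => d x / (k:ℂ)) := hlowbound k hkS.1
      _ ≤ 1 := hkS.2
  exact absurd hcontr (lt_irrefl 1)
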